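/- Let k be a field of characteristic 0 and a,b ∈ k. The discriminant of the sextic polynomial f(X) = (X³ + aX² + bX + 1)(4X³ + b²X² + 2bX + 1) is nonzero if and only if (4a³ + 27 - 18ab - a²b² + 4b³)²·(b³ - 27) ≠ 0. -/

import Mathlib

open Polynomial

/-! Over a perfect field a product is squarefree iff both factors are squarefree and relatively
prime, and a cubic is squarefree iff its discriminant is nonzero. The discriminant of
`X³ + aX² + bX + 1` is `-G` with `G = 4a³ + 27 - 18ab - a²b² + 4b³`, that of
`4X³ + b²X² + 2bX + 1` is `16(b³ - 27)`. Coprimality of the two cubics costs no further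
condition: an explicit Bézout identity `U P + V Q = -G` shows that it already follows from
`G ≠ 0`. -/

theorem Cubic.squarefree_toPoly_iff_discr_ne_zero {K : Type*} [Field K] [PerfectField K]
    {P : Cubic K} (ha : P.a ≠ 0) : Squarefree P.toPoly ↔ P.discr ≠ 0 := by
  have hsplit := IsAlgClosed.splits (P.toPoly.map (algebraMap K (AlgebraicClosure K)))
  rw [discr_ne_zero_iff_roots_nodup ha hsplit, map_roots,
    nodup_roots_iff_of_splits ((Polynomial.map_ne_zero_iff (algebraMap K _).injective).mpr
      (ne_zero_of_a_ne_zero ha)) hsplit, separable_map, PerfectField.separable_iff_squarefree]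

theorem isRelPrime_of_mul_add_mul_eq_isUnit {R : Type*} [CommSemiring R] {p q U V d : R}
    (hd : IsUnit d) (h : U * p + V * q = d) : IsRelPrime p q := fun _ hp hq =>
  isUnit_of_dvd_unit (h ▸ dvd_add (dvd_mul_of_dvd_right hp U) (dvd_mul_of_dvd_right hq V)) hd

section SexticFactors

variable {k : Type*} [Field k]

noncomputable def cubicP (a b : k) : k[X] := X ^ 3 + C a * X ^ 2 + C b * X + 1

noncomputable def cubicQ (b : k) : k[X] := 4 * X ^ 3 + C (b ^ 2) * X ^ 2 + C (2 * b) * X + 1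

theorem squarefree_cubicP_iff [PerfectField k] (a b : k) :
    Squarefree (cubicP a b) ↔ 4 * a ^ 3 + 27 - 18 * a * b - a ^ 2 * b ^ 2 + 4 * b ^ 3 ≠ 0 := by
  have hP : cubicP a b = (⟨1, a, b, 1⟩ : Cubic k).toPoly := by
    simp [cubicP, Cubic.toPoly]
  have hdiscr : (⟨1, a, b, 1⟩ : Cubic k).discr =
      -(4 * a ^ 3 + 27 - 18 * a * b - a ^ 2 * b ^ 2 + 4 * b ^ 3) := by
    simp only [Cubic.discr]; ring
  rw [hP, Cubic.squarefree_toPoly_iff_discr_ne_zero one_ne_zero, hdiscr, neg_ne_zero]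

theorem squarefree_cubicQ_iff [CharZero k] (b : k) :
    Squarefree (cubicQ b) ↔ b ^ 3 - 27 ≠ 0 := by
  have hQ : cubicQ b = (⟨4, b ^ 2, 2 * b, 1⟩ : Cubic k).toPoly := by
    simp [cubicQ, Cubic.toPoly, map_ofNat]
  have hdiscr : (⟨4, b ^ 2, 2 * b, 1⟩ : Cubic k).discr = 16 * (b ^ 3 - 27) := by
    simp only [Cubic.discr]; ring
  rw [hQ, Cubic.squarefree_toPoly_iff_discr_ne_zero (by norm_num : (4 : k) ≠ 0), hdiscr,
    mul_ne_zero_iff_left (by norm_num)]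

theorem isRelPrime_cubicP_cubicQ {a b : k}
    (hG : 4 * a ^ 3 + 27 - 18 * a * b - a ^ 2 * b ^ 2 + 4 * b ^ 3 ≠ 0) :
    IsRelPrime (cubicP a b) (cubicQ b) := by
  refine isRelPrime_of_mul_add_mul_eq_isUnit (isUnit_C.mpr (neg_ne_zero.mpr hG).isUnit)
    (U := C (-36 - 12 * b ^ 3 - b ^ 6 + 40 * a * b + 7 * a * b ^ 4 - 12 * a ^ 2 * b ^ 2)
      + C (24 * b - 3 * b ^ 4 - b ^ 7 - 8 * a * b ^ 2 + 6 * a * b ^ 5 + 16 * a ^ 2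
          - 8 * a ^ 2 * b ^ 3) * X
      + C (-28 * b ^ 2 - 4 * b ^ 5 + 48 * a + 24 * a * b ^ 3 - 32 * a ^ 2 * b) * X ^ 2)
    (V := C (9 + 8 * b ^ 3 + b ^ 6 - 22 * a * b - 7 * a * b ^ 4 + 13 * a ^ 2 * b ^ 2 - 4 * a ^ 3)
      + C (-6 * b - b ^ 4 + 12 * a * b ^ 2 + a * b ^ 5 - 16 * a ^ 2 - 6 * a ^ 2 * b ^ 3
          + 8 * a ^ 3 * b) * X
      + C (7 * b ^ 2 + b ^ 5 - 12 * a - 6 * a * b ^ 3 + 8 * a ^ 2 * b) * X ^ 2) ?_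
  simp only [cubicP, cubicQ, map_add, map_sub, map_mul, map_pow, map_ofNat, map_neg]
  ring

end SexticFactors

theorem sextic_discriminant_nonzero_iff {k : Type*} [Field k] [CharZero k]
    (a b : k) :
    Squarefree ((X ^ 3 + C a * X ^ 2 + C b * X + 1) *
        (4 * X ^ 3 + C (b ^ 2) * X ^ 2 + C (2 * b) * X + 1) : Polynomial k) ↔
      (4 * a ^ 3 + 27 - 18 * a * b - a ^ 2 * b ^ 2 + 4 * b ^ 3) ^ 2 * (b ^ 3 - 27) ≠ 0 := by
  change Squarefree (cubicP a b * cubicQ b) ↔ _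
  rw [squarefree_mul_iff, squarefree_cubicP_iff, squarefree_cubicQ_iff, mul_ne_zero_iff,
    pow_ne_zero_iff two_ne_zero]
  exact ⟨fun h => h.2, fun h => ⟨isRelPrime_cubicP_cubicQ h.1, h⟩⟩
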